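/- (Lower Hermite–Hadamard for (ω₀,ω₁)-convex functions.) Let (ω₀,ω₁) be a positive Chebyshev system on an open interval I and ρ : I → ℝ a positive integrable function. For x < y in I define ξ(x,y) := (ω₁/ω₀)⁻¹( (∫ₓʸ ω₁ρ)/(∫ₓʸ ω₀ρ) ) and c(x,y) := (∫ₓʸ ω₀ρ)/ω₀(ξ(x,y)). If f : I → ℝ is (ω₀,ω₁)-convex, then for all x < y in I, c(x,y)·f(ξ(x,y)) ≤ ∫ₓʸ fρ. -/

import Mathlib

open MeasureTheory intervalIntegral

/-!
By `(ω₀,ω₁)`-convexity the generalized slopes `(ω₀(w) f(c) - ω₀(c) f(w)) / Ω(w,c)` increase as `w`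
crosses `c = ξ(x,y)`, so any `B` separating the slopes on the left of `c` from those on the right
yields a generalized line `A ω₀ + B ω₁` lying below `f` and touching it at `c`. Integrating this
line against `ρ` gives `A ∫ω₀ρ + B ∫ω₁ρ`, and since `ξ` is chosen so that the moments are in the
ratio `ω₁(ξ) : ω₀(ξ)`, this is exactly `(∫ω₀ρ / ω₀(ξ)) f(ξ)`.
-/

section ChebyshevConvex

variable {ω₀ ω₁ f : ℝ → ℝ} {s : Set ℝ} {u v w c B : ℝ}

def chebyshevDet (ω₀ ω₁ : ℝ → ℝ) (u v : ℝ) : ℝ := ω₀ u * ω₁ v - ω₀ v * ω₁ u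

theorem chebyshevDet_swap (u v : ℝ) : chebyshevDet ω₀ ω₁ v u = -chebyshevDet ω₀ ω₁ u v := by
  unfold chebyshevDet; ring

def ChebyshevConvexOn (ω₀ ω₁ : ℝ → ℝ) (s : Set ℝ) (f : ℝ → ℝ) : Prop :=
  ∀ x ∈ s, ∀ u ∈ s, ∀ y ∈ s, x < u → u < y →
    f u ≤ chebyshevDet ω₀ ω₁ u y / chebyshevDet ω₀ ω₁ x y * f x +
      chebyshevDet ω₀ ω₁ x u / chebyshevDet ω₀ ω₁ x y * f y

/-- For `ω₀ = 1`, `ω₁ = id` this is the ordinary slope `(f c - f w) / (c - w)`. -/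
noncomputable def chebyshevSlope (ω₀ ω₁ f : ℝ → ℝ) (c w : ℝ) : ℝ :=
  (ω₀ w * f c - ω₀ c * f w) / chebyshevDet ω₀ ω₁ w c

theorem chebyshevSlope_comm (c w : ℝ) :
    chebyshevSlope ω₀ ω₁ f c w = chebyshevSlope ω₀ ω₁ f w c := by
  unfold chebyshevSlope chebyshevDet
  rw [← neg_div_neg_eq, neg_sub, neg_sub]

theorem ChebyshevConvexOn.slope_mono_adjacent (hf : ChebyshevConvexOn ω₀ ω₁ s f)
    (hΩ : ∀ u ∈ s, ∀ v ∈ s, u < v → 0 < chebyshevDet ω₀ ω₁ u v) (hω₀c : 0 ≤ ω₀ c)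
    (hu : u ∈ s) (hc : c ∈ s) (hv : v ∈ s) (huc : u < c) (hcv : c < v) :
    chebyshevSlope ω₀ ω₁ f c u ≤ chebyshevSlope ω₀ ω₁ f c v := by
  have h := hf u hu c hc v hv huc hcv
  rw [div_mul_eq_mul_div, div_mul_eq_mul_div, ← add_div,
    le_div_iff₀ (hΩ u hu v hv (huc.trans hcv))] at h
  rw [chebyshevSlope_comm c v, chebyshevSlope, chebyshevSlope,
    div_le_div_iff₀ (hΩ u hu c hc huc) (hΩ c hc v hv hcv)]
  unfold chebyshevDet at h ⊢
  -- `ω₀ u Ω(c,v) + ω₀ v Ω(u,c) = ω₀ c Ω(u,v)`, so the goal is `ω₀ c` times `h`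
  linarith [mul_le_mul_of_nonneg_left h hω₀c]

theorem line_le_of_sub_le_mul_chebyshevDet (hω₀c : 0 < ω₀ c)
    (h : ω₀ w * f c - ω₀ c * f w ≤ B * chebyshevDet ω₀ ω₁ w c) :
    (f c - B * ω₁ c) / ω₀ c * ω₀ w + B * ω₁ w ≤ f w := by
  rw [div_mul_eq_mul_div, div_add' _ _ _ hω₀c.ne', div_le_iff₀ hω₀c]
  unfold chebyshevDet at h
  linarith

theorem ChebyshevConvexOn.exists_supporting_line (hf : ChebyshevConvexOn ω₀ ω₁ s f)
    (hΩ : ∀ u ∈ s, ∀ v ∈ s, u < v → 0 < chebyshevDet ω₀ ω₁ u v) (hω₀c : 0 < ω₀ c)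
    (hc : c ∈ s) (hu : u ∈ s) (huc : u < c) (hv : v ∈ s) (hcv : c < v) :
    ∃ A B : ℝ, (∀ w ∈ s, A * ω₀ w + B * ω₁ w ≤ f w) ∧ A * ω₀ c + B * ω₁ c = f c := by
  set B := sSup (chebyshevSlope ω₀ ω₁ f c '' (s ∩ Set.Iio c))
  have hbdd : BddAbove (chebyshevSlope ω₀ ω₁ f c '' (s ∩ Set.Iio c)) := by
    refine ⟨chebyshevSlope ω₀ ω₁ f c v, ?_⟩
    rintro _ ⟨w, ⟨hw, hwc⟩, rfl⟩
    exact hf.slope_mono_adjacent hΩ hω₀c.le hw hc hv hwc hcv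
  have hleft (w : ℝ) (hw : w ∈ s) (hwc : w < c) : chebyshevSlope ω₀ ω₁ f c w ≤ B :=
    le_csSup hbdd ⟨w, ⟨hw, hwc⟩, rfl⟩
  have hright (w : ℝ) (hw : w ∈ s) (hcw : c < w) : B ≤ chebyshevSlope ω₀ ω₁ f c w := by
    refine csSup_le ⟨_, u, ⟨hu, huc⟩, rfl⟩ ?_
    rintro _ ⟨w', ⟨hw', hw'c⟩, rfl⟩
    exact hf.slope_mono_adjacent hΩ hω₀c.le hw' hc hw hw'c hcw
  refine ⟨(f c - B * ω₁ c) / ω₀ c, B, fun w hw => ?_, by field_simp; ring⟩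
  apply line_le_of_sub_le_mul_chebyshevDet hω₀c
  rcases lt_trichotomy w c with hwc | rfl | hcw
  · exact (div_le_iff₀ (hΩ w hw c hc hwc)).1 (hleft w hw hwc)
  · exact le_of_eq (by unfold chebyshevDet; ring)
  · have hneg : chebyshevDet ω₀ ω₁ w c < 0 := by
      rw [chebyshevDet_swap]
      exact neg_neg_of_pos (hΩ c hc w hw hcw)
    exact (le_div_iff_of_neg hneg).1 (hright w hw hcw)

end ChebyshevConvex

theorem intervalIntegral_linearCombination_mul {μ : Measure ℝ} {ω₀ ω₁ ρ : ℝ → ℝ} {x y : ℝ}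
    (h₀ : IntervalIntegrable (fun u => ω₀ u * ρ u) μ x y)
    (h₁ : IntervalIntegrable (fun u => ω₁ u * ρ u) μ x y) (A B : ℝ) :
    ∫ u in x..y, (A * ω₀ u + B * ω₁ u) * ρ u ∂μ =
      A * ∫ u in x..y, ω₀ u * ρ u ∂μ + B * ∫ u in x..y, ω₁ u * ρ u ∂μ := by
  simp_rw [add_mul, mul_assoc]
  rw [integral_add (h₀.const_mul A) (h₁.const_mul B), intervalIntegral.integral_const_mul,
    intervalIntegral.integral_const_mul]

theorem lower_hermite_hadamard_chebyshev_general
    (a b : ℝ)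
    (ω₀ ω₁ : ℝ → ℝ)
    (hc₀ : ContinuousOn ω₀ (Set.Ioo a b)) (hc₁ : ContinuousOn ω₁ (Set.Ioo a b))
    (hω₀pos : ∀ z ∈ Set.Ioo a b, 0 < ω₀ z)
    (hcheb : ∀ u ∈ Set.Ioo a b, ∀ v ∈ Set.Ioo a b, u < v →
        0 < ω₀ u * ω₁ v - ω₀ v * ω₁ u)
    (ρ : ℝ → ℝ) (hρpos : ∀ z ∈ Set.Ioo a b, 0 < ρ z)
    (hρint : ∀ x ∈ Set.Ioo a b, ∀ y ∈ Set.Ioo a b, IntervalIntegrable ρ volume x y)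
    -- ξ(x,y) is the (ω₁/ω₀)-inverse of the weighted ratio of moments
    (ξ : ℝ → ℝ → ℝ)
    (hξ : ∀ x ∈ Set.Ioo a b, ∀ y ∈ Set.Ioo a b, x < y →
        ξ x y ∈ Set.Ioo x y ∧
        ω₁ (ξ x y) / ω₀ (ξ x y) =
          (∫ u in x..y, ω₁ u * ρ u) / (∫ u in x..y, ω₀ u * ρ u))
    (f : ℝ → ℝ)
    (hfρint : ∀ x ∈ Set.Ioo a b, ∀ y ∈ Set.Ioo a b,
        IntervalIntegrable (fun u => f u * ρ u) volume x y)
    -- f is (ω₀,ω₁)-convex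
    (hconv : ∀ x ∈ Set.Ioo a b, ∀ u ∈ Set.Ioo a b, ∀ y ∈ Set.Ioo a b,
        x < u → u < y →
        f u ≤ (ω₀ u * ω₁ y - ω₀ y * ω₁ u) / (ω₀ x * ω₁ y - ω₀ y * ω₁ x) * f x +
          (ω₀ x * ω₁ u - ω₀ u * ω₁ x) / (ω₀ x * ω₁ y - ω₀ y * ω₁ x) * f y) :
    ∀ x ∈ Set.Ioo a b, ∀ y ∈ Set.Ioo a b, x < y →
      (∫ u in x..y, ω₀ u * ρ u) / ω₀ (ξ x y) * f (ξ x y) ≤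
        ∫ u in x..y, f u * ρ u := by
  intro x hx y hy hxy
  obtain ⟨⟨hxξ, hξy⟩, hratio⟩ := hξ x hx y hy hxy
  have hsub : Set.uIcc x y ⊆ Set.Ioo a b := Set.ordConnected_Ioo.uIcc_subset hx hy
  have hξmem : ξ x y ∈ Set.Ioo a b := ⟨hx.1.trans hxξ, hξy.trans hy.2⟩
  have hω₀ξ := hω₀pos _ hξmem
  obtain ⟨A, B, hline, hlineξ⟩ :=
    ChebyshevConvexOn.exists_supporting_line hconv hcheb hω₀ξ hξmem hx hxξ hy hξy
  have hρ := hρint x hx y hy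
  have h₀ := hρ.continuousOn_mul (hc₀.mono hsub)
  have h₁ := hρ.continuousOn_mul (hc₁.mono hsub)
  have hI₀ : 0 < ∫ u in x..y, ω₀ u * ρ u := by
    refine intervalIntegral_pos_of_pos_on h₀ (fun u hu => ?_) hxy
    have hu' := hsub (Set.Icc_subset_uIcc (Set.Ioo_subset_Icc_self hu))
    exact mul_pos (hω₀pos u hu') (hρpos u hu')
  rw [div_eq_div_iff hω₀ξ.ne' hI₀.ne'] at hratio
  calc (∫ u in x..y, ω₀ u * ρ u) / ω₀ (ξ x y) * f (ξ x y)
      = A * (∫ u in x..y, ω₀ u * ρ u) + B * ∫ u in x..y, ω₁ u * ρ u := by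
        rw [← hlineξ]
        field_simp
        linear_combination B * hratio
    _ = ∫ u in x..y, (A * ω₀ u + B * ω₁ u) * ρ u :=
        (intervalIntegral_linearCombination_mul h₀ h₁ A B).symm
    _ ≤ ∫ u in x..y, f u * ρ u := by
        refine integral_mono_on hxy.le (hρ.continuousOn_mul ?_) (hfρint x hx y hy) fun u hu => ?_
        · exact ((continuousOn_const.mul hc₀).add (continuousOn_const.mul hc₁)).mono hsub
        · have hu' := hsub (Set.Icc_subset_uIcc hu)
          exact mul_le_mul_of_nonneg_right (hline u hu') (hρpos u hu').le

/-- lower Hermite–Hadamard for `(ω₀,ω₁)`-convex functions: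
`c(x,y)·f(ξ(x,y)) ≤ ∫ₓʸ fρ`, where `ξ(x,y) = (ω₁/ω₀)⁻¹((∫ₓʸω₁ρ)/(∫ₓʸω₀ρ))`
and `c(x,y) = (∫ₓʸω₀ρ)/ω₀(ξ(x,y))`. -/
theorem lower_hermite_hadamard_chebyshev
    (a b : ℝ) (hab : a < b)
    (ω₀ ω₁ : ℝ → ℝ)
    (hc₀ : ContinuousOn ω₀ (Set.Ioo a b)) (hc₁ : ContinuousOn ω₁ (Set.Ioo a b))
    (hω₀pos : ∀ z ∈ Set.Ioo a b, 0 < ω₀ z)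
    (hcheb : ∀ u ∈ Set.Ioo a b, ∀ v ∈ Set.Ioo a b, u < v →
        0 < ω₀ u * ω₁ v - ω₀ v * ω₁ u)
    (ρ : ℝ → ℝ) (hρpos : ∀ z ∈ Set.Ioo a b, 0 < ρ z)
    (hρint : ∀ x ∈ Set.Ioo a b, ∀ y ∈ Set.Ioo a b, IntervalIntegrable ρ volume x y)
    -- ξ(x,y) is the (ω₁/ω₀)-inverse of the weighted ratio of moments
    (ξ : ℝ → ℝ → ℝ)
    (hξ : ∀ x ∈ Set.Ioo a b, ∀ y ∈ Set.Ioo a b, x < y →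
        ξ x y ∈ Set.Ioo x y ∧
        ω₁ (ξ x y) / ω₀ (ξ x y) =
          (∫ u in x..y, ω₁ u * ρ u) / (∫ u in x..y, ω₀ u * ρ u))
    (f : ℝ → ℝ)
    (hfρint : ∀ x ∈ Set.Ioo a b, ∀ y ∈ Set.Ioo a b,
        IntervalIntegrable (fun u => f u * ρ u) volume x y)
    -- f is (ω₀,ω₁)-convex
    (hconv : ∀ x ∈ Set.Ioo a b, ∀ u ∈ Set.Ioo a b, ∀ y ∈ Set.Ioo a b,
        x < u → u < y →
        f u ≤ (ω₀ u * ω₁ y - ω₀ y * ω₁ u) / (ω₀ x * ω₁ y - ω₀ y * ω₁ x) * f x +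
          (ω₀ x * ω₁ u - ω₀ u * ω₁ x) / (ω₀ x * ω₁ y - ω₀ y * ω₁ x) * f y) :
    ∀ x ∈ Set.Ioo a b, ∀ y ∈ Set.Ioo a b, x < y →
      (∫ u in x..y, ω₀ u * ρ u) / ω₀ (ξ x y) * f (ξ x y) ≤
        ∫ u in x..y, f u * ρ u :=
  lower_hermite_hadamard_chebyshev_general a b ω₀ ω₁ hc₀ hc₁ hω₀pos hcheb ρ hρpos hρint ξ hξ f
    hfρint hconv
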